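/- Let X and Y be real Banach spaces and A : X → Y a weakly compact bounded linear operator. Then for every σ > 0 and every real constant C the following are equivalent: (a) for every y ∈ B_Y and every net (x_λ) ⊆ B_X converging weakly to 0, limsup_λ ‖y + σ A x_λ‖ ≤ C; (b) for every y ∈ B_Y and every net (x**_λ) ⊆ B_{X**} converging to 0 in the w*-topology σ(X**, X*), limsup_λ ‖j_Y(y) + σ A** x**_λ‖ ≤ C (norm in Y**). (This expresses that the modulus of asymptotic uniform smoothness of A equals the w*-modulus of A** : X** → Y; it is the ξ = 0 case of the paper's Corollary 5.2, where B-trees of order ω⁰ = 1 reduce to nets.) -/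

import Mathlib

/-!
Direction (b) ⇒ (a) is the restriction of (b) to nets in `j_X(B_X)`, on which `A**` acts as
`j_Y ∘ A`.

For (a) ⇒ (b), let `(Φᵢ)` be a w*-null net in `B_{X**}` with
`limsup ‖j_Y y + σ A** Φᵢ‖ > c > C`. For each `Φᵢ` with `‖j_Y y + σ A** Φᵢ‖ > c`, a norming
functional `g ∈ B_{Y*}` and Goldstine's theorem, tested on `A* g` and finitely many further
functionals, give `x ∈ B_X` with `‖y + σ A x‖ > c` that is close to `Φᵢ` on those functionals.
Hence `0` lies in the weak closure of `S = {x ∈ B_X | c < ‖y + σ A x‖}`. The nets in (a) are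
indexed by types of a fixed universe, so the neighbourhood filter of the weak topology cannot
serve as an index set. Instead, Banach–Alaoglu shows that `0` is already in the weak closure of
a countable subset of `S`, whose traces of weak neighbourhoods form a small directed set. The
weakly null net in `S` obtained this way has `limsup ≥ c > C`, contradicting (a).
-/

open Filter Topology Pointwise NormedSpace

noncomputable section

variable {X Y : Type*} [NormedAddCommGroup X] [NormedSpace ℝ X] [CompleteSpace X]
  [NormedAddCommGroup Y] [NormedSpace ℝ Y] [CompleteSpace Y]

/-- The adjoint `A* : Y* → X*` of a bounded linear operator, `(A* g)(x) = g (A x)`. -/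
def opAdjoint (A : X →L[ℝ] Y) : StrongDual ℝ Y →L[ℝ] StrongDual ℝ X :=
  (ContinuousLinearMap.compSL X Y ℝ (RingHom.id ℝ) (RingHom.id ℝ)).flip A

/-- An operator is weakly compact if the image of the closed unit ball is
relatively compact in the weak topology of the codomain. -/
def IsWeaklyCompactOp (A : X →L[ℝ] Y) : Prop :=
  IsCompact (closure (toWeakSpace ℝ Y '' (A '' Metric.closedBall 0 1)))

theorem Filter.exists_tendsto_atTop_of_small {β : Type*} (l : Filter β) [l.NeBot]
    [Small.{u} (Set β)] :
    ∃ (ι : Type u) (_ : Preorder ι) (_ : IsDirected ι (· ≤ ·)) (_ : Nonempty ι) (x : ι → β),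
      Tendsto x atTop l := by
  let κ := (↥l.sets)ᵒᵈ
  have hκ : IsDirected κ (· ≤ ·) :=
    ⟨fun s t => ⟨OrderDual.toDual ⟨_, inter_mem s.2 t.2⟩, Set.inter_subset_left,
      Set.inter_subset_right⟩⟩
  let e := orderIsoShrink.{u} κ
  refine ⟨Shrink.{u} κ, inferInstance, ⟨fun i j => ?_⟩, ⟨e (OrderDual.toDual ⟨_, univ_mem⟩)⟩,
    fun i => (nonempty_of_mem (e.symm i).2).some, fun s hs => ?_⟩
  · obtain ⟨k, hik, hjk⟩ := directed_of (· ≤ ·) (e.symm i) (e.symm j)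
    exact ⟨e k, e.symm_apply_le.mp hik, e.symm_apply_le.mp hjk⟩
  · exact mem_map.2 <| mem_of_superset (mem_atTop (e (OrderDual.toDual ⟨s, hs⟩))) fun i hi =>
      e.le_symm_apply.mpr hi (nonempty_of_mem (e.symm i).2).some_mem

section WeakTopology

variable {E : Type*} [NormedAddCommGroup E] [NormedSpace ℝ E]

theorem zero_mem_weakClosure_iff {s : Set E} :
    (0 : WeakSpace ℝ E) ∈ closure (toWeakSpace ℝ E '' s) ↔
      ∀ F : Finset (StrongDual ℝ E), ∀ r > 0, ∃ x ∈ s, ∀ f ∈ F, |f x| < r := by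
  refine (mem_closure_iff_nhds_basis
    (LinearMap.weakBilin_withSeminorms (topDualPairing ℝ E).flip).hasBasis_zero_ball).trans ?_
  refine Prod.forall.trans <| forall_congr' fun F => forall₂_congr fun r (hr : 0 < r) => ?_
  simp only [Seminorm.mem_ball_zero]
  constructor
  · rintro ⟨_, ⟨x, hx, rfl⟩, hxr⟩
    exact ⟨x, hx, fun f hf => (Seminorm.le_finset_sup_apply hf).trans_lt hxr⟩
  · rintro ⟨x, hx, hxr⟩
    exact ⟨_, ⟨x, hx, rfl⟩, Seminorm.finset_sup_apply_lt hr hxr⟩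

/-- Goldstine's theorem, tested on finitely many functionals. -/
theorem exists_norm_le_one_forall_abs_sub_lt {ι : Type*} [Fintype ι]
    (Φ : StrongDual ℝ (StrongDual ℝ E)) (hΦ : ‖Φ‖ ≤ 1) (g : ι → StrongDual ℝ E) {ε : ℝ}
    (hε : 0 < ε) : ∃ x : E, ‖x‖ ≤ 1 ∧ ∀ i, |g i x - Φ (g i)| < ε := by
  classical
  let T : E →ₗ[ℝ] ι → ℝ := LinearMap.pi fun i => (g i : E →ₗ[ℝ] ℝ)
  have hS : ∀ x : E, ‖x‖ ≤ 1 → T x ∈ closure (T '' Metric.closedBall 0 1) := fun x hx =>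
    subset_closure ⟨x, mem_closedBall_zero_iff.2 hx, rfl⟩
  have hclosure : (fun i => Φ (g i)) ∈ closure (T '' Metric.closedBall 0 1) := by
    -- otherwise a functional separating it from `T(B_E)` pulls back to `h` with `‖h‖ ≤ u < Φ h`
    by_contra hc
    obtain ⟨φ, u, hφu, huφ⟩ := geometric_hahn_banach_closed_point
      ((convex_closedBall 0 1).linear_image T).closure isClosed_closure hc
    have hφ (v : ι → ℝ) : φ v = ∑ i, v i * φ (fun j => if i = j then 1 else 0) :=
      LinearMap.pi_apply_eq_sum_univ (φ : (ι → ℝ) →ₗ[ℝ] ℝ) v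
    let h : StrongDual ℝ E := ∑ i, φ (fun j => if i = j then 1 else 0) • g i
    have hT (x : E) : h x = φ (T x) := by rw [hφ]; simp [h, T, mul_comm]
    have hΦh : Φ h = φ (fun i => Φ (g i)) := by rw [hφ]; simp [h, mul_comm]
    have hu : 0 ≤ u := by simpa using (hφu _ (hS 0 (by simp))).le
    have hh : ‖h‖ ≤ u := h.opNorm_le_of_unit_norm hu fun x hx => by
      have h₁ := hφu _ (hS x hx.le)
      have h₂ := hφu _ (hS (-x) (by rw [norm_neg, hx]))
      rw [map_neg, map_neg] at h₂
      rw [Real.norm_eq_abs, abs_le, hT]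
      constructor <;> linarith
    have hΦu : Φ h ≤ u := calc
      Φ h ≤ ‖Φ h‖ := Real.le_norm_self _
      _ ≤ 1 * ‖h‖ := Φ.le_of_opNorm_le hΦ h
      _ ≤ u := by linarith
    linarith
  obtain ⟨_, ⟨x, hx, rfl⟩, hdist⟩ := Metric.mem_closure_iff.1 hclosure ε hε
  refine ⟨x, mem_closedBall_zero_iff.1 hx, fun i => ?_⟩
  rw [← Real.dist_eq]
  exact (dist_le_pi_dist (T x) _ i).trans_lt (dist_comm (T x) _ ▸ hdist)

theorem exists_finite_subset_forall_abs_lt {s : Set E}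
    (hs : (0 : WeakSpace ℝ E) ∈ closure (toWeakSpace ℝ E '' s)) (n : ℕ) (R : ℝ) {ε : ℝ}
    (hε : 0 < ε) :
    ∃ T ⊆ s, T.Finite ∧ ∀ g : Fin n → StrongDual ℝ E, (∀ k, ‖g k‖ ≤ R) →
      ∃ x ∈ T, ∀ k, |g k x| < ε := by
  classical
  let K : Set (Fin n → WeakDual ℝ E) :=
    Set.univ.pi fun _ => WeakDual.toStrongDual ⁻¹' Metric.closedBall 0 R
  have hK : IsCompact K := isCompact_univ_pi fun _ => WeakDual.isCompact_closedBall 0 R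
  have hopen : ∀ x ∈ s, IsOpen {g : Fin n → WeakDual ℝ E | ∀ k, |g k x| < ε} := fun x _ => by
    simp only [Set.ofPred_forall]
    exact isOpen_iInter_of_finite fun k =>
      isOpen_lt ((WeakDual.eval_continuous x).comp (continuous_apply k)).abs continuous_const
  have hcover : K ⊆ ⋃ x ∈ s, {g | ∀ k, |g k x| < ε} := fun g _ => by
    obtain ⟨x, hx, hgx⟩ := zero_mem_weakClosure_iff.1 hs
      (Finset.univ.image fun k => WeakDual.toStrongDual (g k)) ε hε
    exact Set.mem_biUnion hx fun k => hgx _ (Finset.mem_image_of_mem _ (Finset.mem_univ k))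
  obtain ⟨T, hTs, hTfin, hKT⟩ := hK.elim_finite_subcover_image hopen hcover
  refine ⟨T, hTs, hTfin, fun g hg => ?_⟩
  have hgK : (fun k => StrongDual.toWeakDual (g k)) ∈ K := fun k _ =>
    mem_closedBall_zero_iff.2 (hg k)
  obtain ⟨x, hxT, hx⟩ := Set.mem_iUnion₂.1 (hKT hgK)
  exact ⟨x, hxT, hx⟩

theorem exists_countable_subset_zero_mem_weakClosure {s : Set E}
    (hs : (0 : WeakSpace ℝ E) ∈ closure (toWeakSpace ℝ E '' s)) :
    ∃ M ⊆ s, M.Countable ∧ (0 : WeakSpace ℝ E) ∈ closure (toWeakSpace ℝ E '' M) := by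
  choose T hTs hTfin hT using fun n N : ℕ =>
    exists_finite_subset_forall_abs_lt hs n N (ε := ((N : ℝ) + 1)⁻¹) (by positivity)
  refine ⟨⋃ n, ⋃ N, T n N, Set.iUnion₂_subset hTs,
    Set.countable_iUnion fun n => Set.countable_iUnion fun N => (hTfin n N).countable,
    zero_mem_weakClosure_iff.2 fun F r hr => ?_⟩
  obtain ⟨N, hN⟩ := exists_nat_gt (∑ f ∈ F, ‖f‖ + r⁻¹)
  have hsum : 0 ≤ ∑ f ∈ F, ‖f‖ := F.sum_nonneg fun f _ => norm_nonneg f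
  have hFN : ∀ f ∈ F, ‖f‖ ≤ N := fun f hf =>
    (F.single_le_sum (fun f _ => norm_nonneg f) hf).trans (by linarith [inv_pos.2 hr])
  have hNr : ((N : ℝ) + 1)⁻¹ < r := inv_lt_of_inv_lt₀ hr (by linarith)
  obtain ⟨x, hxT, hx⟩ := hT F.card N (fun k => F.equivFin.symm k) fun k =>
    hFN _ (F.equivFin.symm k).2
  refine ⟨x, Set.mem_iUnion₂.2 ⟨_, _, hxT⟩, fun f hf => ?_⟩
  simpa using (hx (F.equivFin ⟨f, hf⟩)).trans hNr

theorem exists_net_of_zero_mem_weakClosure {s : Set E}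
    (hs : (0 : WeakSpace ℝ E) ∈ closure (toWeakSpace ℝ E '' s)) :
    ∃ (ι : Type u) (_ : Preorder ι) (_ : IsDirected ι (· ≤ ·)) (_ : Nonempty ι) (x : ι → E),
      (∀ i, x i ∈ s) ∧ ∀ f : StrongDual ℝ E, Tendsto (fun i => f (x i)) atTop (𝓝 0) := by
  obtain ⟨M, hMs, hM, hM0⟩ := exists_countable_subset_zero_mem_weakClosure hs
  have := (hM.image (toWeakSpace ℝ E)).to_subtype
  have := mem_closure_iff_comap_neBot.1 hM0
  obtain ⟨ι, _, _, _, x, hx⟩ := Filter.exists_tendsto_atTop_of_small.{_, u}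
    (comap ((↑) : toWeakSpace ℝ E '' M → WeakSpace ℝ E) (𝓝 (0 : WeakSpace ℝ E)))
  refine ⟨ι, _, ‹_›, ‹_›, fun i => (toWeakSpace ℝ E).symm (x i), fun i => ?_, fun f => ?_⟩
  · obtain ⟨y, hy, hxy⟩ := (x i).2
    simpa [← hxy] using hMs hy
  · have hf : Tendsto (fun w : WeakSpace ℝ E => (topDualPairing ℝ E).flip w f) (𝓝 0) (𝓝 0) :=
      (WeakBilin.eval_continuous _ f).tendsto' _ _ f.map_zero
    have hx' : Tendsto (fun i => (x i : WeakSpace ℝ E)) atTop (𝓝 0) := tendsto_comap_iff.1 hx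
    exact hf.comp hx'

end WeakTopology

section Operator

variable {E F : Type*} [NormedAddCommGroup E] [NormedSpace ℝ E] [NormedAddCommGroup F]
  [NormedSpace ℝ F]

theorem exists_norm_le_one_lt_norm_add_smul_apply (A : E →L[ℝ] F)
    {Φ : StrongDual ℝ (StrongDual ℝ E)} (hΦ : ‖Φ‖ ≤ 1) {y : F} {σ c : ℝ}
    (hc : c < ‖inclusionInDoubleDual ℝ F y + σ • Φ.comp (opAdjoint A)‖)
    (s : Finset (StrongDual ℝ E)) {ε : ℝ} (hε : 0 < ε) :
    ∃ x : E, ‖x‖ ≤ 1 ∧ c < ‖y + σ • A x‖ ∧ ∀ f ∈ s, |f x - Φ f| < ε := by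
  classical
  obtain ⟨g, hg, hcg⟩ := ContinuousLinearMap.exists_lt_apply_of_lt_opNorm _ hc
  let a := opAdjoint A g
  have hga : ∀ x, g (y + σ • A x) = g y + σ * a x := fun x => by simp [a, opAdjoint]
  have hcg' : c < |g y + σ * Φ a| := by simpa [a, opAdjoint] using hcg
  -- `δ` leaves room for the error `σ (a x - Φ a)` within the margin `|g y + σ Φ a| - c`
  set δ := min ε ((|g y + σ * Φ a| - c) / (|σ| + 1))
  have hδ : 0 < δ := lt_min hε (div_pos (sub_pos.2 hcg') (by positivity))
  have hσδ : |σ| * δ + δ ≤ |g y + σ * Φ a| - c := by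
    have := (le_div_iff₀ (by positivity : (0 : ℝ) < |σ| + 1)).1
      (min_le_right ε ((|g y + σ * Φ a| - c) / (|σ| + 1)))
    linarith
  obtain ⟨x, hx, hxs⟩ := exists_norm_le_one_forall_abs_sub_lt Φ hΦ
    (fun f : ↥(insert a s) => (f : StrongDual ℝ E)) hδ
  refine ⟨x, hx, ?_, fun f hf => (hxs ⟨f, Finset.mem_insert_of_mem hf⟩).trans_le (min_le_left _ _)⟩
  have hax : |σ * (a x - Φ a)| ≤ |σ| * δ := by
    rw [abs_mul]
    exact mul_le_mul_of_nonneg_left (hxs ⟨a, Finset.mem_insert_self a s⟩).le (abs_nonneg σ)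
  have hgv := g.le_of_opNorm_le hg.le (y + σ • A x)
  rw [hga, Real.norm_eq_abs, one_mul] at hgv
  have := abs_sub_abs_le_abs_sub (g y + σ * Φ a) (g y + σ * a x)
  rw [show g y + σ * Φ a - (g y + σ * a x) = -(σ * (a x - Φ a)) by ring, abs_neg] at this
  linarith

theorem zero_mem_weakClosure_of_frequently_lt (A : E →L[ℝ] F) {ι : Type*} {l : Filter ι}
    {Φ : ι → StrongDual ℝ (StrongDual ℝ E)} (hΦ : ∀ i, ‖Φ i‖ ≤ 1)
    (hnull : ∀ f, Tendsto (fun i => Φ i f) l (𝓝 0)) {y : F} {σ c : ℝ}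
    (hfreq : ∃ᶠ i in l, c < ‖inclusionInDoubleDual ℝ F y + σ • (Φ i).comp (opAdjoint A)‖) :
    (0 : WeakSpace ℝ E) ∈ closure (toWeakSpace ℝ E '' {x | ‖x‖ ≤ 1 ∧ c < ‖y + σ • A x‖}) := by
  refine zero_mem_weakClosure_iff.2 fun s r hr => ?_
  have hsmall : ∀ᶠ i in l, ∀ f ∈ s, |Φ i f| < r / 2 :=
    (eventually_all_finset s).2 fun f _ =>
      (hnull f).abs.eventually_lt_const (by simpa using half_pos hr)
  obtain ⟨i, hci, his⟩ := (hfreq.and_eventually hsmall).exists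
  obtain ⟨x, hx, hcx, hxs⟩ :=
    exists_norm_le_one_lt_norm_add_smul_apply A (hΦ i) hci s (half_pos hr)
  refine ⟨x, ⟨hx, hcx⟩, fun f hf => ?_⟩
  linarith [abs_sub_abs_le_abs_sub (f x) (Φ i f), hxs f hf, his f hf]

theorem norm_inclusionInDoubleDual_add_smul_comp_opAdjoint (A : E →L[ℝ] F) (y : F) (σ : ℝ)
    (x : E) :
    ‖inclusionInDoubleDual ℝ F y + σ • (inclusionInDoubleDual ℝ E x).comp (opAdjoint A)‖ =
      ‖y + σ • A x‖ := by
  have : (inclusionInDoubleDual ℝ E x).comp (opAdjoint A) = inclusionInDoubleDual ℝ F (A x) := rfl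
  rw [this, ← map_smul, ← map_add]
  exact (inclusionInDoubleDualLi ℝ).norm_map _

end Operator

theorem statement2_general (A : X →L[ℝ] Y)
    (σ : ℝ) (C : ℝ) :
    (∀ (ι : Type u) [Preorder ι] [IsDirected ι (· ≤ ·)] [Nonempty ι],
      ∀ y : Y, ‖y‖ ≤ 1 → ∀ x : ι → X, (∀ i, ‖x i‖ ≤ 1) →
        (∀ f : StrongDual ℝ X, Tendsto (fun i => f (x i)) atTop (𝓝 0)) →
        limsup (fun i => ‖y + σ • A (x i)‖) atTop ≤ C) ↔
    (∀ (ι : Type u) [Preorder ι] [IsDirected ι (· ≤ ·)] [Nonempty ι],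
      ∀ y : Y, ‖y‖ ≤ 1 → ∀ xss : ι → StrongDual ℝ (StrongDual ℝ X), (∀ i, ‖xss i‖ ≤ 1) →
        (∀ f : StrongDual ℝ X, Tendsto (fun i => xss i f) atTop (𝓝 0)) →
        limsup (fun i =>
          ‖inclusionInDoubleDual ℝ Y y + σ • (xss i).comp (opAdjoint A)‖) atTop ≤ C) := by
  constructor
  · intro h ι _ _ _ y hy Φ hΦ hnull
    by_contra! hCL
    obtain ⟨c, hCc, hcL⟩ := exists_between hCL
    have hfreq := frequently_lt_of_lt_limsup
      (isCoboundedUnder_le_of_le atTop (x := 0) fun _ => by positivity) hcL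
    obtain ⟨κ, _, _, _, x, hx, hxnull⟩ := exists_net_of_zero_mem_weakClosure <|
      zero_mem_weakClosure_of_frequently_lt A hΦ hnull hfreq
    have hbdd : IsBoundedUnder (· ≤ ·) atTop fun i => ‖y + σ • A (x i)‖ :=
      isBoundedUnder_of ⟨‖y‖ + ‖σ‖ * ‖A‖, fun i => (norm_add_le _ _).trans <| by
        grw [norm_smul, A.le_opNorm_of_le (hx i).1, mul_one]⟩
    have hcx : c ≤ limsup (fun i => ‖y + σ • A (x i)‖) atTop :=
      le_limsup_of_frequently_le (.of_forall fun i => (hx i).2.le) hbdd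
    linarith [h κ y hy x (fun i => (hx i).1) hxnull]
  · intro h ι _ _ _ y hy x hx hnull
    simpa only [norm_inclusionInDoubleDual_add_smul_comp_opAdjoint] using
      h ι y hy (fun i => inclusionInDoubleDual ℝ X (x i))
        (fun i => (double_dual_bound ℝ X (x i)).trans (hx i)) hnull

/-- the ξ = 0 case of Corollary 5.2: for a weakly compact operator,
the net form of the AUS modulus of `A` agrees with the w*-net form for
`A** : X** → Y`. -/
theorem statement2 (A : X →L[ℝ] Y) (hA : IsWeaklyCompactOp A)
    (σ : ℝ) (hσ : 0 < σ) (C : ℝ) :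
    (∀ (ι : Type u) [Preorder ι] [IsDirected ι (· ≤ ·)] [Nonempty ι],
      ∀ y : Y, ‖y‖ ≤ 1 → ∀ x : ι → X, (∀ i, ‖x i‖ ≤ 1) →
        (∀ f : StrongDual ℝ X, Tendsto (fun i => f (x i)) atTop (𝓝 0)) →
        limsup (fun i => ‖y + σ • A (x i)‖) atTop ≤ C) ↔
    (∀ (ι : Type u) [Preorder ι] [IsDirected ι (· ≤ ·)] [Nonempty ι],
      ∀ y : Y, ‖y‖ ≤ 1 → ∀ xss : ι → StrongDual ℝ (StrongDual ℝ X), (∀ i, ‖xss i‖ ≤ 1) →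
        (∀ f : StrongDual ℝ X, Tendsto (fun i => xss i f) atTop (𝓝 0)) →
        limsup (fun i =>
          ‖inclusionInDoubleDual ℝ Y y + σ • (xss i).comp (opAdjoint A)‖) atTop ≤ C) :=
  statement2_general A σ C
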